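/- Let M, N be positive integers, s, β ∈ ℂ, and for i ∈ {1, 2} let (δ_{i1}, δ_{i2}) ∈ ℝ² and define the noiseless observation y_i = (s·β/√(MN)) · Σ_{m=1}^{M} Σ_{n=1}^{N} exp( −j·2π·( (m−1)·δ_{i1}/M + (n−1)·δ_{i2}/N ) ). Then the complex number y_1 · conj(y_2) · exp( j·π·( ((M−1)/M)·(δ_{11} − δ_{21}) + ((N−1)/N)·(δ_{12} − δ_{22}) ) ) is real; equivalently, the phase difference between any two noiseless observations is determined by the direction parameter offsets alone and carries no information about the channel parameters beyond a common factor. -/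

import Mathlib

open Finset

/-- The noiseless pilot observation
`y = (s·β/√(MN)) ∑_{m=1}^{M} ∑_{n=1}^{N} exp(-j·2π·((m-1)·d₁/M + (n-1)·d₂/N))`
for a direction parameter offset `(d₁, d₂)`. -/
noncomputable def noiselessObs (M N : ℕ) (s β : ℂ) (d₁ d₂ : ℝ) : ℂ :=
  s * β / ((Real.sqrt (M * N) : ℝ) : ℂ) *
    ∑ m ∈ Finset.range M, ∑ n ∈ Finset.range N,
      Complex.exp (-Complex.I * (2 * (Real.pi : ℂ)) *
        ((m : ℂ) * (d₁ : ℂ) / (M : ℂ) + (n : ℂ) * (d₂ : ℂ) / (N : ℂ)))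

/-!
Each observation factors as `c · A_M(d₁) · A_N(d₂)` with one-dimensional array factors
`A_M(d) = ∑_{m<M} exp(-2πj·m·d/M)`. Moving the phase reference to the array center,
`A_M(d) · exp(jπ(M-1)d/M) = ∑_{m<M} exp(jπ(d/M)(M-1-2m))`, whose terms are swapped with their
conjugates by `m ↦ M-1-m`; so this centered factor is real. The exponential in the statement is
exactly the product of the centering phases, so the quantity is `|c|²` times products of centered
factors and their conjugates, all real.
-/

open Complex ComplexConjugate
open scoped Real

lemma im_sum_range_eq_zero_of_conj_reflect {M : ℕ} (f : ℕ → ℂ)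
    (hf : ∀ m < M, conj (f m) = f (M - 1 - m)) : (∑ m ∈ range M, f m).im = 0 := by
  rw [← conj_eq_iff_im, map_sum, ← sum_range_reflect f]
  exact sum_congr rfl fun m hm => hf m (mem_range.mp hm)

lemma im_sum_range_exp_centered (M : ℕ) (θ : ℝ) :
    (∑ m ∈ range M, exp (θ * ((M : ℂ) - 1 - 2 * m) * I)).im = 0 := by
  refine im_sum_range_eq_zero_of_conj_reflect _ fun m hm => ?_
  rw [← exp_conj, Nat.cast_sub (by omega), Nat.cast_sub (by omega)]
  simp only [map_mul, map_sub, map_one, map_ofNat, conj_ofReal, conj_I, conj_natCast,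
    Nat.cast_one]
  congr 1
  ring

noncomputable def arrayFactor (M : ℕ) (d : ℝ) : ℂ :=
  ∑ m ∈ range M, exp (-I * (2 * π) * (m * d / M))

noncomputable def centeredArrayFactor (M : ℕ) (d : ℝ) : ℂ :=
  arrayFactor M d * exp (I * π * ((M - 1) / M * d))

lemma noiselessObs_eq_mul_arrayFactor (M N : ℕ) (s β : ℂ) (d₁ d₂ : ℝ) :
    noiselessObs M N s β d₁ d₂ =
      s * β / ((Real.sqrt (M * N) : ℝ) : ℂ) * (arrayFactor M d₁ * arrayFactor N d₂) := by
  simp only [noiselessObs, arrayFactor, sum_mul_sum, mul_add, exp_add]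

lemma im_centeredArrayFactor (M : ℕ) (d : ℝ) : (centeredArrayFactor M d).im = 0 := by
  rw [centeredArrayFactor, arrayFactor, sum_mul]
  convert im_sum_range_exp_centered M (π * d / M) using 3 with m
  rw [← exp_add]
  push_cast
  congr 1
  ring

lemma arrayFactor_mul_conj_mul_exp (M : ℕ) (d d' : ℝ) :
    arrayFactor M d * conj (arrayFactor M d') * exp (I * π * ((M - 1) / M * (d - d'))) =
      centeredArrayFactor M d * conj (centeredArrayFactor M d') := by
  have h_phase : exp (I * π * ((M - 1) / M * (d - d'))) =
      exp (I * π * ((M - 1) / M * d)) * conj (exp (I * π * ((M - 1) / M * d'))) := by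
    simp only [← exp_conj, ← exp_add, map_mul, map_div₀, map_sub, map_one, conj_I,
      conj_ofReal, conj_natCast]
    congr 1
    ring
  rw [h_phase, centeredArrayFactor, centeredArrayFactor, map_mul]
  ring

lemma im_mul_conj_eq_zero {z w : ℂ} (hz : z.im = 0) (hw : w.im = 0) : (z * conj w).im = 0 := by
  simp [mul_im, hz, hw]

theorem noiseless_obs_phase_relation_general (M N : ℕ)
    (s β : ℂ) (δ₁₁ δ₁₂ δ₂₁ δ₂₂ : ℝ) :
    (noiselessObs M N s β δ₁₁ δ₁₂ * (starRingEnd ℂ) (noiselessObs M N s β δ₂₁ δ₂₂) *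
      Complex.exp (Complex.I * (Real.pi : ℂ) *
        ((((M : ℂ) - 1) / (M : ℂ)) * ((δ₁₁ : ℂ) - (δ₂₁ : ℂ)) +
         (((N : ℂ) - 1) / (N : ℂ)) * ((δ₁₂ : ℂ) - (δ₂₂ : ℂ))))).im = 0 := by
  rw [noiselessObs_eq_mul_arrayFactor, noiselessObs_eq_mul_arrayFactor, mul_add, exp_add]
  set c := s * β / ((Real.sqrt (M * N) : ℝ) : ℂ)
  have h_regroup : c * (arrayFactor M δ₁₁ * arrayFactor N δ₁₂) *
      conj (c * (arrayFactor M δ₂₁ * arrayFactor N δ₂₂)) *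
      (exp (I * π * ((M - 1) / M * (δ₁₁ - δ₂₁))) *
        exp (I * π * ((N - 1) / N * (δ₁₂ - δ₂₂)))) =
      c * conj c *
        (arrayFactor M δ₁₁ * conj (arrayFactor M δ₂₁) *
          exp (I * π * ((M - 1) / M * (δ₁₁ - δ₂₁)))) *
        (arrayFactor N δ₁₂ * conj (arrayFactor N δ₂₂) *
          exp (I * π * ((N - 1) / N * (δ₁₂ - δ₂₂)))) := by
    simp only [map_mul]
    ring
  have h_real_M :=
    im_mul_conj_eq_zero (im_centeredArrayFactor M δ₁₁) (im_centeredArrayFactor M δ₂₁)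
  have h_real_N :=
    im_mul_conj_eq_zero (im_centeredArrayFactor N δ₁₂) (im_centeredArrayFactor N δ₂₂)
  rw [h_regroup, arrayFactor_mul_conj_mul_exp, arrayFactor_mul_conj_mul_exp, mul_conj, mul_im,
    im_ofReal_mul, h_real_M, h_real_N]
  ring

/-- The phase difference between two noiseless observations is determined by the direction
parameter offsets alone: `y₁ · conj(y₂) · exp(j·π·(((M-1)/M)(δ₁₁-δ₂₁) + ((N-1)/N)(δ₁₂-δ₂₂)))`
is a real number. -/
theorem noiseless_obs_phase_relation (M N : ℕ) (hM : 0 < M) (hN : 0 < N)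
    (s β : ℂ) (δ₁₁ δ₁₂ δ₂₁ δ₂₂ : ℝ) :
    (noiselessObs M N s β δ₁₁ δ₁₂ * (starRingEnd ℂ) (noiselessObs M N s β δ₂₁ δ₂₂) *
      Complex.exp (Complex.I * (Real.pi : ℂ) *
        ((((M : ℂ) - 1) / (M : ℂ)) * ((δ₁₁ : ℂ) - (δ₂₁ : ℂ)) +
         (((N : ℂ) - 1) / (N : ℂ)) * ((δ₁₂ : ℂ) - (δ₂₂ : ℂ))))).im = 0 :=
  noiseless_obs_phase_relation_general M N s β δ₁₁ δ₁₂ δ₂₁ δ₂₂
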